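/- For every set X, the class H_X is a set. Moreover, if X is an infinite transitive set, then H_X is a transitive, full set of successor type with maximal cardinality X, and H_X is strongly regular. -/

import Mathlib

/-!
A set `Y` lies in `H_X` iff its transitive closure has cardinality at most `κ = |X|`. The ranks of
the elements of a transitive set form an initial segment of the ordinals, so such a `Y` has rank
below `κ⁺`, and `H_X` is cut out of `V_{κ⁺}` by separation. For infinite `κ` the sets hereditarily
of size `≤ κ` are closed under subsets and Kuratowski pairs (hence under products and under coded
functions between their members) and contain every ordinal below `κ⁺`; as `κ⁺` is regular, any
family of at most `κ` such ordinals is bounded by one of them.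
-/

namespace NairianModels

open ZFSet

/-! ## Basic cardinality notions -/

/-- `f` codes a surjection from `X` onto `Y`: a set of Kuratowski ordered pairs that is a
function with domain `X` and values in `Y`, every element of `Y` being a value. -/
def ZFSurj (X Y f : ZFSet) : Prop :=
  ZFSet.IsFunc X Y f ∧ ∀ y ∈ Y, ∃ x ∈ X, ZFSet.pair x y ∈ f

/-- `|X| ≲ |Y|`: either `X = ∅` or there is a surjection from `Y` onto `X`. -/
def CardLE (X Y : ZFSet) : Prop :=
  X = ∅ ∨ ∃ f, ZFSurj Y X f

/-- `|X| ≈ |Y|`. -/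
def CardEq (X Y : ZFSet) : Prop :=
  CardLE X Y ∧ CardLE Y X

/-- `X` is a maximal cardinality of `M`: `X ∈ M` and every nonempty `Y ∈ M` is the image of a
surjection from `X` that belongs to `M`. -/
def IsMaxCard (X M : ZFSet) : Prop :=
  X ∈ M ∧ ∀ Y ∈ M, Y = ∅ ∨ ∃ f ∈ M, ZFSurj X Y f

/-- `M` is of successor type: it has a maximal cardinality. -/
def SuccType (M : ZFSet) : Prop :=
  ∃ X, IsMaxCard X M

/-! ## Fullness -/

def TransClosed (M : ZFSet) : Prop :=
  ∀ Y ∈ M, ∃ Z ∈ M, Z.IsTransitive ∧ Z ⊆ M ∧ Y ∈ Z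

def ProdClosed (M : ZFSet) : Prop :=
  ∀ X ∈ M, ∀ Y ∈ M, ZFSet.prod X Y ∈ M

def SubsetClosed (M : ZFSet) : Prop :=
  ∀ X ∈ M, ZFSet.powerset X ⊆ M

def Full (M : ZFSet) : Prop :=
  TransClosed M ∧ ProdClosed M ∧ SubsetClosed M

/-! ## Ordinals, strong regularity, hierarchicality, H-likeness -/

/-- von Neumann ordinal: a transitive set linearly ordered by `∈`. -/
def IsOrd (x : ZFSet) : Prop :=
  x.IsTransitive ∧
    (∀ y ∈ x, ∀ z ∈ x, y ∈ z ∨ y = z ∨ z ∈ y) ∧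
    (∀ a ∈ x, ∀ b ∈ x, ∀ c ∈ x, a ∈ b → b ∈ c → a ∈ c)

/-- limit (von Neumann) ordinal: a nonempty ordinal with no largest element. -/
def IsLimitOrd (x : ZFSet) : Prop :=
  IsOrd x ∧ x ≠ ∅ ∧ ∀ y ∈ x, ∃ z ∈ x, y ∈ z

/-- `M` is strongly regular: any (set-coded) function from an `X ∈ M` to the ordinals
belonging to `M` is bounded by an ordinal in `M`. -/
def StronglyRegular (M : ZFSet) : Prop :=
  ∀ X ∈ M, ∀ f : ZFSet,
    (∀ p ∈ f, ∃ x ∈ X, ∃ o, IsOrd o ∧ o ∈ M ∧ p = ZFSet.pair x o) →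
    (∀ x ∈ X, ∃ o, ZFSet.pair x o ∈ f) →
    (∀ x ∈ X, ∀ o o', ZFSet.pair x o ∈ f → ZFSet.pair x o' ∈ f → o = o') →
    ∃ β, IsOrd β ∧ β ∈ M ∧ ∀ x ∈ X, ∀ o, ZFSet.pair x o ∈ f → o ∈ β

/-- `M` is hierarchical: it is the continuous increasing union, along the ordinals belonging
to `M`, of transitive sets belonging to `M`. -/
def Hierarchical (M : ZFSet) : Prop :=
  ∃ F : ZFSet → ZFSet,
    (∀ α, IsOrd α → α ∈ M → (F α).IsTransitive ∧ F α ∈ M) ∧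
    (∀ α β, IsOrd α → IsOrd β → α ∈ M → β ∈ M → α ∈ β → F α ⊆ F β) ∧
    (∀ β, IsLimitOrd β → β ∈ M → ∀ x, x ∈ F β ↔ ∃ α ∈ β, x ∈ F α) ∧
    (∀ x, x ∈ M ↔ ∃ α, IsOrd α ∧ α ∈ M ∧ x ∈ F α)

/-- `M` is H-like: transitive, full, hierarchical, and strongly regular in case it is of
successor type. -/
def HLike (M : ZFSet) : Prop :=
  M.IsTransitive ∧ Full M ∧ Hierarchical M ∧ (SuccType M → StronglyRegular M)

/-! ## Transitive closure and the classes `H_X` -/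

/-- Iterated unions: `iterUnion x n = ⋃ⁿ x`. -/
def iterUnion (x : ZFSet) : ℕ → ZFSet
  | 0 => x
  | n + 1 => ZFSet.sUnion (iterUnion x n)

/-- The transitive closure of `x` (the least transitive set including `x`):
`x ∪ ⋃x ∪ ⋃⋃x ∪ ⋯`. -/
noncomputable def transCl (x : ZFSet) : ZFSet :=
  ZFSet.sUnion (ZFSet.range fun n : ℕ => iterUnion x n)

/-- `Y ∈ H_X`: there is a surjection from `X` onto the transitive closure of `{Y}`. -/
def MemH (X Y : ZFSet) : Prop :=
  ∃ f, ZFSurj X (transCl ({Y} : ZFSet)) f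

/-! ## First-order logic over `(W, ∈)` -/

/-- Formulas of the language of set theory, with variables indexed by `ℕ`. -/
inductive Fml : Type
  | mem : ℕ → ℕ → Fml
  | equal : ℕ → ℕ → Fml
  | not : Fml → Fml
  | and : Fml → Fml → Fml
  | ex : ℕ → Fml → Fml

/-- Satisfaction of a formula in the structure `(D, ∈)` under the assignment `v`. -/
def Sat (D : ZFSet) : Fml → (ℕ → ZFSet) → Prop
  | .mem i j, v => v i ∈ v j
  | .equal i j, v => v i = v j
  | .not φ, v => ¬ Sat D φ v
  | .and φ ψ, v => Sat D φ v ∧ Sat D ψ v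
  | .ex n φ, v => ∃ a, a ∈ D ∧ Sat D φ (Function.update v n a)

/-- `(X, ∈)` is an elementary substructure of `(W, ∈)`. -/
def ElemSub (X W : ZFSet) : Prop :=
  X ⊆ W ∧ ∀ (φ : Fml) (v : ℕ → ZFSet), (∀ n, v n ∈ X) → (Sat X φ v ↔ Sat W φ v)

/-- `π` is an elementary embedding of `(M, ∈)` into `(W, ∈)`. -/
def IsElemEmb (M W : ZFSet) (π : ZFSet → ZFSet) : Prop :=
  (∀ x ∈ M, π x ∈ W) ∧
    ∀ (φ : Fml) (v : ℕ → ZFSet), (∀ n, v n ∈ M) →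
      (Sat M φ v ↔ Sat W φ fun n => π (v n))

/-- `M` is `X`-closed: `X ∪ {X} ⊆ M` and every (set-coded) function from `X` into `M`
belongs to `M`. -/
def XClosed (X M : ZFSet) : Prop :=
  X ⊆ M ∧ X ∈ M ∧ ∀ f, ZFSet.IsFunc X M f → f ∈ M

/-- `M` is definably closed: any subset of a transitive `N ∈ M` definable over `(N, ∈)` with
parameters in `N` belongs to `M`. -/
def DefClosed (M : ZFSet) : Prop :=
  ∀ N, N ∈ M → N.IsTransitive →
    ∀ (φ : Fml) (v : ℕ → ZFSet), (∀ n, v n ∈ N) →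
      ∀ A : ZFSet, (∀ y, y ∈ A ↔ y ∈ N ∧ Sat N φ (Function.update v 0 y)) → A ∈ M

/-- The reflection principle `ref(X, Y, Z)`. -/
def Ref (X Y Z : ZFSet) : Prop :=
  ∀ W a : ZFSet, W.IsTransitive → XClosed X W → Y ∈ W → a ∈ W →
    ∃ (M : ZFSet) (π : ZFSet → ZFSet),
      M.IsTransitive ∧ IsElemEmb M W π ∧ ({X, Y} : ZFSet) ∈ M ∧
      (∃ x ∈ M, π x = a) ∧ M ∈ Z ∧
      (∀ z, z ∈ X ∨ z ∈ Y ∨ z = X ∨ z = Y → π z = z) ∧ XClosed X M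

/-! ## The N-hierarchy -/

/-- Hereditarily finite sets. -/
def HFin : ZFSet → Prop :=
  ZFSet.mem_wf.fix (C := fun _ => Prop) fun x IH =>
    x.toSet.Finite ∧ ∀ y, ∀ h : y ∈ x, IH y h

/-- `F` is the N-hierarchy: `F 0` is the set of hereditarily finite sets, `F 1 = H_{F 0}`,
`F (α+2) = H_{F (α+1)}`, and for limit `α`, `F α = ⋃_{β<α} F β` and
`F (α+1) = H_{𝒫(F α)}`. -/
def IsNHierarchy (F : Ordinal → ZFSet) : Prop :=
  (∀ Y, Y ∈ F 0 ↔ HFin Y) ∧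
  (∀ Y, Y ∈ F 1 ↔ MemH (F 0) Y) ∧
  (∀ α : Ordinal, ∀ Y, Y ∈ F (α + 2) ↔ MemH (F (α + 1)) Y) ∧
  (∀ α : Ordinal, Order.IsSuccLimit α →
    (∀ Y, Y ∈ F α ↔ ∃ β < α, Y ∈ F β) ∧
    (∀ Y, Y ∈ F (α + 1) ↔ MemH (ZFSet.powerset (F α)) Y))

/-! ## Auxiliary product constructions -/

/-- Left-nested cartesian product `Y 0 × Y 1 × ⋯ × Y n`. -/
def nestedProd (Y : ℕ → ZFSet) : ℕ → ZFSet
  | 0 => Y 0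
  | n + 1 => ZFSet.prod (nestedProd Y n) (Y (n + 1))

/-- Left-nested cartesian power `X^n` (with junk value `∅` at `n = 0`). -/
def nPow (X : ZFSet) : ℕ → ZFSet
  | 0 => ∅
  | 1 => X
  | n + 2 => ZFSet.prod (nPow X (n + 1)) X

/-- `W` is `<κ`-closed: every function from an ordinal `η < κ` into `W` belongs to `W`. -/
def LtClosed (κ W : ZFSet) : Prop :=
  ∀ η ∈ κ, ∀ f, ZFSet.IsFunc η W f → f ∈ W


universe u

open Cardinal

theorem mem_transCl_iff {x z : ZFSet} : z ∈ transCl x ↔ ∃ n, z ∈ iterUnion x n := by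
  simp [transCl, mem_sUnion, mem_range]

theorem subset_transCl (x : ZFSet) : x ⊆ transCl x :=
  fun _ hz => mem_transCl_iff.2 ⟨0, hz⟩

theorem isTransitive_transCl (x : ZFSet) : (transCl x).IsTransitive := by
  intro y hy w hw
  obtain ⟨n, hn⟩ := mem_transCl_iff.1 hy
  exact mem_transCl_iff.2 ⟨n + 1, mem_sUnion.2 ⟨y, hn, hw⟩⟩

theorem transCl_subset {x T : ZFSet} (hT : T.IsTransitive) (h : x ⊆ T) : transCl x ⊆ T := by
  have iterUnion_subset : ∀ n, iterUnion x n ⊆ T := by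
    intro n
    induction n with
    | zero => exact h
    | succ n ih =>
      intro z hz
      obtain ⟨w, hw, hzw⟩ := mem_sUnion.1 hz
      exact hT w (ih hw) hzw
  intro z hz
  obtain ⟨n, hn⟩ := mem_transCl_iff.1 hz
  exact iterUnion_subset n hn

theorem mem_transCl_singleton (Y : ZFSet) : Y ∈ transCl ({Y} : ZFSet) :=
  subset_transCl _ (mem_singleton.2 rfl)

theorem subset_transCl_singleton (Y : ZFSet) : Y ⊆ transCl ({Y} : ZFSet) :=
  isTransitive_transCl _ Y (mem_transCl_singleton Y)

theorem transCl_singleton_subset_of_mem {Y z : ZFSet} (hz : z ∈ transCl ({Y} : ZFSet)) :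
    transCl ({z} : ZFSet) ⊆ transCl ({Y} : ZFSet) :=
  transCl_subset (isTransitive_transCl _) fun _ hw => mem_singleton.1 hw ▸ hz

theorem transCl_singleton_subset_insert {Y T : ZFSet} (hT : T.IsTransitive) (hY : Y ⊆ T) :
    transCl ({Y} : ZFSet) ⊆ insert Y T := by
  refine transCl_subset ?_ fun z hz => mem_insert_iff.2 (Or.inl (mem_singleton.1 hz))
  intro z hz w hw
  rcases mem_insert_iff.1 hz with rfl | hzT
  · exact mem_insert_iff.2 (Or.inr (hY hw))
  · exact mem_insert_iff.2 (Or.inr (hT z hzT hw))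

theorem card_le_of_zfSurj {A B f : ZFSet.{u}} (hf : ZFSurj A B f) : card B ≤ card A := by
  choose g hgA hgf using hf.2
  have hinj : Function.Injective fun b : B => (⟨g b b.2, hgA b b.2⟩ : A) := by
    rintro ⟨b, hb⟩ ⟨b', hb'⟩ h
    have hgg : g b hb = g b' hb' := congrArg Subtype.val h
    exact Subtype.ext ((hf.1.2 _ (hgA b hb)).unique (hgf b hb) (hgg ▸ hgf b' hb'))
  simpa [cardinalMk_coe_sort] using mk_le_of_injective hinj

theorem exists_zfSurj_of_card_le {A B : ZFSet.{u}} (hB : B.Nonempty) (h : card B ≤ card A) :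
    ∃ f, ZFSurj A B f := by
  classical
  rw [← lift_le.{u + 1}, ← cardinalMk_coe_sort, ← cardinalMk_coe_sort] at h
  obtain ⟨e⟩ := h
  have : Nonempty B := hB.to_subtype
  let σ : ZFSet → ZFSet := fun a => if ha : a ∈ A then (Function.invFun e ⟨a, ha⟩).1 else ∅
  have : Definable₁ σ := Classical.allZFSetDefinable _
  refine ⟨map σ A, map_isFunc.2 fun a ha => by simp [σ, ha], fun b hb => ?_⟩
  refine ⟨e ⟨b, hb⟩, (e ⟨b, hb⟩).2, mem_map.2 ⟨_, (e ⟨b, hb⟩).2, ?_⟩⟩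
  simp [σ, Function.leftInverse_invFun e.injective _]

theorem memH_iff_card_le {X Y : ZFSet} : MemH X Y ↔ card (transCl ({Y} : ZFSet)) ≤ card X :=
  ⟨fun ⟨_, hf⟩ => card_le_of_zfSurj hf,
    exists_zfSurj_of_card_le ⟨Y, mem_transCl_singleton Y⟩⟩

theorem isOrd_iff_isOrdinal {x : ZFSet} : IsOrd x ↔ x.IsOrdinal := by
  refine ⟨fun ⟨htr, _, htrans⟩ => ⟨htr, fun hyz hzw hwx => ?_⟩, fun h => ⟨h.isTransitive,
    fun _ hy _ hz => IsOrdinal.mem_trichotomous (h.mem hy) (h.mem hz),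
    fun _ _ _ _ _ hc hab hbc => h.mem_trans' hab hbc hc⟩⟩
  have hz := htr _ hwx hzw
  exact htrans _ (htr _ hz hyz) _ hz _ hwx hyz hzw

theorem exists_rank_eq_of_lt_rank {T z : ZFSet.{u}} (hT : T.IsTransitive) (hz : z ∈ T)
    {o : Ordinal.{u}} (ho : o < rank z) : ∃ w ∈ T, rank w = o := by
  induction z using ZFSet.inductionOn with
  | h z ih =>
    obtain ⟨y, hy, hoy⟩ := lt_rank_iff.1 ho
    rcases hoy.eq_or_lt with rfl | hlt
    · exact ⟨y, hT z hz hy, rfl⟩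
    · exact ih y hy (hT z hz hy) hlt

theorem card_rank_le_card {T Y : ZFSet.{u}} (hT : T.IsTransitive) (hY : Y ∈ T) :
    (rank Y).card ≤ card T := by
  have hsub : Set.Iio (rank Y) ⊆ rank '' (T : Set ZFSet) := fun _ ho =>
    exists_rank_eq_of_lt_rank hT hY ho
  rw [← lift_le.{u + 1}, ← mk_Iio_ordinal, ← cardinalMk_coe_sort]
  exact (mk_le_mk_of_subset hsub).trans mk_image_le

def HeredCardLE (κ : Cardinal) (Y : ZFSet) : Prop :=
  card (transCl ({Y} : ZFSet)) ≤ κ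

section HeredCardLE

variable {κ : Cardinal} {Y : ZFSet}

theorem HeredCardLE.card_le (h : HeredCardLE κ Y) : card Y ≤ κ :=
  (card_mono (subset_transCl_singleton Y)).trans h

theorem HeredCardLE.of_mem_transCl {z : ZFSet} (h : HeredCardLE κ Y)
    (hz : z ∈ transCl ({Y} : ZFSet)) : HeredCardLE κ z :=
  (card_mono (transCl_singleton_subset_of_mem hz)).trans h

theorem HeredCardLE.mem {z : ZFSet} (h : HeredCardLE κ Y) (hz : z ∈ Y) : HeredCardLE κ z :=
  h.of_mem_transCl (subset_transCl_singleton Y hz)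

theorem HeredCardLE.rank_lt (h : HeredCardLE κ Y) : rank Y < (Order.succ κ).ord :=
  lt_ord.2 <| Order.lt_succ_of_le <|
    (card_rank_le_card (isTransitive_transCl _) (mem_transCl_singleton Y)).trans h

theorem heredCardLE_of_subset_isTransitive {T : ZFSet} (hκ : ℵ₀ ≤ κ) (hT : T.IsTransitive)
    (hYT : Y ⊆ T) (hTκ : card T ≤ κ) : HeredCardLE κ Y :=
  calc card (transCl ({Y} : ZFSet))
      ≤ card (insert Y T) := card_mono (transCl_singleton_subset_insert hT hYT)
    _ ≤ card T + 1 := card_insert_le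
    _ ≤ κ := add_le_of_le hκ hTκ (one_lt_aleph0.le.trans hκ)

theorem HeredCardLE.subset {A : ZFSet} (hκ : ℵ₀ ≤ κ) (h : HeredCardLE κ Y) (hA : A ⊆ Y) :
    HeredCardLE κ A :=
  heredCardLE_of_subset_isTransitive hκ (isTransitive_transCl _)
    (hA.trans (subset_transCl_singleton Y)) h

theorem heredCardLE_toZFSet {o : Ordinal} (hκ : ℵ₀ ≤ κ) (ho : o < (Order.succ κ).ord) :
    HeredCardLE κ o.toZFSet :=
  heredCardLE_of_subset_isTransitive hκ (isOrdinal_toZFSet o).isTransitive subset_rfl <| by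
    rw [Ordinal.card_toZFSet]
    exact Order.lt_succ_iff.1 (lt_ord.1 ho)

end HeredCardLE

noncomputable def pairClosure (T : ZFSet.{u}) : ZFSet.{u} :=
  T ∪ ZFSet.range fun p : T × T => {p.1.1, p.2.1}

theorem subset_pairClosure (T : ZFSet) : T ⊆ pairClosure T :=
  fun _ hz => mem_union.2 (Or.inl hz)

theorem doubleton_mem_pairClosure {T a b : ZFSet} (ha : a ∈ T) (hb : b ∈ T) :
    {a, b} ∈ pairClosure T :=
  mem_union.2 (Or.inr (mem_range.2 ⟨(⟨a, ha⟩, ⟨b, hb⟩), rfl⟩))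

theorem isTransitive_pairClosure {T : ZFSet} (hT : T.IsTransitive) :
    (pairClosure T).IsTransitive := by
  intro z hz w hw
  rcases mem_union.1 hz with hzT | hzR
  · exact subset_pairClosure T (hT z hzT hw)
  · obtain ⟨⟨⟨a, ha⟩, ⟨b, hb⟩⟩, rfl⟩ := mem_range.1 hzR
    rcases mem_pair.1 hw with rfl | rfl <;> exact subset_pairClosure T ‹_›

theorem card_pairClosure_le {T : ZFSet.{u}} {κ : Cardinal.{u}} (hκ : ℵ₀ ≤ κ) (hT : card T ≤ κ) :
    card (pairClosure T) ≤ κ := by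
  refine card_union_le.trans (add_le_of_le hκ hT ?_)
  rw [← lift_le.{u + 1}]
  refine lift_card_range_le.trans ?_
  simpa [mk_prod, cardinalMk_coe_sort, ← lift_mul] using
    (mul_le_mul' hT hT).trans (mul_eq_self hκ).le

theorem pair_mem_pairClosure_pairClosure {T a b : ZFSet} (ha : a ∈ T) (hb : b ∈ T) :
    pair a b ∈ pairClosure (pairClosure T) := by
  have hsingleton : ({a} : ZFSet) ∈ pairClosure T := by
    simpa using doubleton_mem_pairClosure ha ha
  exact doubleton_mem_pairClosure hsingleton (doubleton_mem_pairClosure ha hb)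

theorem HeredCardLE.prod {κ : Cardinal} {X Y : ZFSet} (hκ : ℵ₀ ≤ κ)
    (hX : HeredCardLE κ X) (hY : HeredCardLE κ Y) : HeredCardLE κ (prod X Y) := by
  set S := transCl ({X} : ZFSet) ∪ transCl ({Y} : ZFSet)
  have hS : S.IsTransitive := (isTransitive_transCl _).union (isTransitive_transCl _)
  have hSκ : card S ≤ κ := card_union_le.trans (add_le_of_le hκ hX hY)
  refine heredCardLE_of_subset_isTransitive hκ
    (isTransitive_pairClosure (isTransitive_pairClosure hS)) ?_
    (card_pairClosure_le hκ (card_pairClosure_le hκ hSκ))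
  intro p hp
  obtain ⟨a, ha, b, hb, rfl⟩ := mem_prod.1 hp
  exact pair_mem_pairClosure_pairClosure
    (mem_union.2 (Or.inl (subset_transCl_singleton X ha)))
    (mem_union.2 (Or.inr (subset_transCl_singleton Y hb)))

theorem exists_heredCardLE_isOrdinal_bound {κ : Cardinal} {A : ZFSet} (hκ : ℵ₀ ≤ κ)
    (hA : card A ≤ κ) (g : A → ZFSet) (hg : ∀ x, (g x).IsOrdinal ∧ HeredCardLE κ (g x)) :
    ∃ β : ZFSet, β.IsOrdinal ∧ HeredCardLE κ β ∧ ∀ x, g x ∈ β := by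
  have hγ : ⨆ x, rank (g x) + 1 < (Order.succ κ).ord := by
    refine Ordinal.lift_iSup_add_one_lt_of_lt_cof ?_ fun x => (hg x).2.rank_lt
    rw [cardinalMk_coe_sort, lift_lift, ← Ordinal.lift_cof, (isRegular_succ hκ).cof_ord]
    simpa using Order.lt_succ_of_le hA
  refine ⟨_, isOrdinal_toZFSet _, heredCardLE_toZFSet hκ hγ, fun x => ?_⟩
  rw [← (hg x).1.toZFSet_rank_eq, Ordinal.toZFSet_mem_toZFSet_iff]
  exact (Order.lt_add_one_iff.2 le_rfl).trans_le (Ordinal.le_iSup (fun x => rank (g x) + 1) x)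

/-- `H_{κ⁺}`; for `κ = |X|` this is `H_X`. -/
noncomputable def heredCardLESet (κ : Cardinal) : ZFSet :=
  ZFSet.sep (HeredCardLE κ) (vonNeumann (Order.succ κ).ord)

section heredCardLESet

variable {κ : Cardinal}

theorem mem_heredCardLESet {Y : ZFSet} : Y ∈ heredCardLESet κ ↔ HeredCardLE κ Y := by
  rw [heredCardLESet, mem_sep, mem_vonNeumann]
  exact ⟨And.right, fun h => ⟨h.rank_lt, h⟩⟩

theorem isTransitive_heredCardLESet : (heredCardLESet κ).IsTransitive := fun _ hY _ hz =>
  mem_heredCardLESet.2 ((mem_heredCardLESet.1 hY).mem hz)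

theorem full_heredCardLESet (hκ : ℵ₀ ≤ κ) : Full (heredCardLESet κ) := by
  simp only [Full, TransClosed, ProdClosed, SubsetClosed, mem_heredCardLESet]
  refine ⟨fun Y hY => ⟨transCl ({Y} : ZFSet), ?_, isTransitive_transCl _, fun z hz => ?_,
    mem_transCl_singleton Y⟩, fun X hX Y hY => hX.prod hκ hY, fun Y hY A hA => ?_⟩
  · exact heredCardLE_of_subset_isTransitive hκ (isTransitive_transCl _) subset_rfl hY
  · exact mem_heredCardLESet.2 (hY.of_mem_transCl hz)
  · exact mem_heredCardLESet.2 (hY.subset hκ (mem_powerset.1 hA))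

theorem stronglyRegular_heredCardLESet (hκ : ℵ₀ ≤ κ) : StronglyRegular (heredCardLESet κ) := by
  intro A hA f hf_ord hf_total hf_func
  choose o ho using hf_total
  have ho_ord : ∀ x : A, (o x x.2).IsOrdinal ∧ HeredCardLE κ (o x x.2) := by
    intro ⟨x, hx⟩
    obtain ⟨_, _, o', ho'_ord, ho'_mem, hp⟩ := hf_ord _ (ho x hx)
    obtain ⟨-, rfl⟩ := pair_injective hp
    exact ⟨isOrd_iff_isOrdinal.1 ho'_ord, mem_heredCardLESet.1 ho'_mem⟩
  obtain ⟨β, hβ, hβκ, hoβ⟩ := exists_heredCardLE_isOrdinal_bound hκ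
    (mem_heredCardLESet.1 hA).card_le _ ho_ord
  refine ⟨β, isOrd_iff_isOrdinal.2 hβ, mem_heredCardLESet.2 hβκ, fun x hx o' hxo' => ?_⟩
  rw [hf_func x hx o' (o x hx) hxo' (ho x hx)]
  exact hoβ ⟨x, hx⟩

theorem isMaxCard_heredCardLESet {X : ZFSet} (hX : X.IsTransitive) (hκ : ℵ₀ ≤ card X) :
    IsMaxCard X (heredCardLESet (card X)) := by
  have hXX : HeredCardLE (card X) X := heredCardLE_of_subset_isTransitive hκ hX subset_rfl le_rfl
  refine ⟨mem_heredCardLESet.2 hXX, fun Y hY => ?_⟩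
  rw [mem_heredCardLESet] at hY
  rcases Y.eq_empty_or_nonempty with rfl | hYne
  · exact Or.inl rfl
  obtain ⟨f, hf⟩ := exists_zfSurj_of_card_le hYne hY.card_le
  exact Or.inr ⟨f, mem_heredCardLESet.2 ((hXX.prod hκ hY).subset hκ hf.1.1), hf⟩

end heredCardLESet

theorem aleph0_le_card_of_infinite {X : ZFSet.{u}} (hX : X.toSet.Infinite) : ℵ₀ ≤ card X := by
  rw [← lift_le.{u + 1}, lift_aleph0, ← cardinalMk_coe_sort, aleph0_le_mk_iff]
  exact hX.to_subtype

theorem stmt15 (X : ZFSet) :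
    (∃ H : ZFSet, ∀ Y, Y ∈ H ↔ MemH X Y) ∧
    (X.toSet.Infinite → X.IsTransitive →
      ∀ H : ZFSet, (∀ Y, Y ∈ H ↔ MemH X Y) →
        H.IsTransitive ∧ Full H ∧ SuccType H ∧ IsMaxCard X H ∧ StronglyRegular H) := by
  have hHX : ∀ Y, Y ∈ heredCardLESet (card X) ↔ MemH X Y := fun _ =>
    mem_heredCardLESet.trans memH_iff_card_le.symm
  refine ⟨⟨_, hHX⟩, fun hinf hXt H hH => ?_⟩
  obtain rfl : H = heredCardLESet (card X) := ZFSet.ext fun Y => (hH Y).trans (hHX Y).symm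
  have hκ := aleph0_le_card_of_infinite hinf
  have hmax := isMaxCard_heredCardLESet hXt hκ
  exact ⟨isTransitive_heredCardLESet, full_heredCardLESet hκ, ⟨X, hmax⟩, hmax,
    stronglyRegular_heredCardLESet hκ⟩

end NairianModels
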